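/- arXiv:1904.12078 — 7 statements merged into one kernel-verified Lean document; each statement's English description precedes it below -/
import Mathlib

section
/- Let n ≥ 4 and let (a(r,j)) be a frieze of type D_n whose ordinary rows are n-periodic, i.e. a(r, j+n) = a(r,j) for all 1 ≤ r ≤ n−2 and all j ∈ ℤ. Then: if n is even, a(n−1, j+n) = a(n−1, j) and a(n, j+n) = a(n, j) for all j (the frieze is n-periodic); and if n is odd, a(n−1, j+n) = a(n, j) and a(n, j+n) = a(n−1, j) for all j (the last two rows are interchanged after n steps). In particular, in both cases a(r, j+2n) = a(r, j) for all 1 ≤ r ≤ n and all j, so the frieze is 2n-periodic. -/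
/-- A frieze of type `D_n`: positive integer rows `a r j` for `1 ≤ r ≤ n`,
with the convention `a 0 j = 1`, satisfying the type `D` frieze relations. -/
def IsFriezeD (n : ℤ) (a : ℤ → ℤ → ℤ) : Prop :=
  (∀ r j : ℤ, 1 ≤ r → r ≤ n → 0 < a r j) ∧
  (∀ j : ℤ, a 0 j = 1) ∧
  (∀ r j : ℤ, 1 ≤ r → r ≤ n - 3 →
    a r j * a r (j + 1) = 1 + a (r - 1) (j + 1) * a (r + 1) j) ∧
  (∀ j : ℤ, a (n - 1) j * a (n - 1) (j + 1) = 1 + a (n - 2) (j + 1)) ∧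
  (∀ j : ℤ, a n j * a n (j + 1) = 1 + a (n - 2) (j + 1)) ∧
  (∀ j : ℤ, a (n - 2) j * a (n - 2) (j + 1) =
    1 + a (n - 3) (j + 1) * a (n - 1) j * a n j)

private lemma friezeD_sq_cancel {x y : ℤ} (hx : 0 < x) (hy : 0 < y)
    (h : x * x = y * y) : x = y := by
  nlinarith [sq_nonneg (x - y), sq_nonneg (x + y)]

/-- periodicity of a type `D_n` frieze with `n`-periodic ordinary rows. -/
theorem friezeD_periodicity (n : ℤ) (hn : 4 ≤ n) (a : ℤ → ℤ → ℤ)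
    (ha : IsFriezeD n a)
    (hper : ∀ r j : ℤ, 1 ≤ r → r ≤ n - 2 → a r (j + n) = a r j) :
    (Even n → ∀ j : ℤ, a (n - 1) (j + n) = a (n - 1) j ∧ a n (j + n) = a n j) ∧
    (Odd n → ∀ j : ℤ, a (n - 1) (j + n) = a n j ∧ a n (j + n) = a (n - 1) j) ∧
    (∀ r j : ℤ, 1 ≤ r → r ≤ n → a r (j + 2 * n) = a r j) := by
  obtain ⟨hpos, h0, hdiam, hb, hc, hd⟩ := ha
  have hbpos : ∀ j, 0 < a (n - 1) j := fun j => hpos _ j (by omega) (by omega)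
  have hcpos : ∀ j, 0 < a n j := fun j => hpos _ j (by omega) (by omega)
  have key1 : ∀ j, a (n - 1) j * a (n - 1) (j + 1) = a n j * a n (j + 1) := fun j => by
    rw [hb j, hc j]
  -- alternating identity
  have alt : ∀ k : ℕ, ∀ j : ℤ,
      (Even k → a (n - 1) j * a n (j + k) = a n j * a (n - 1) (j + k)) ∧
      (Odd k → a (n - 1) j * a (n - 1) (j + k) = a n j * a n (j + k)) := by
    intro k
    induction k with
    | zero =>
      intro j
      refine ⟨fun _ => ?_, fun h => absurd h (by decide)⟩
      push_cast
      ring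
    | succ k ih =>
      intro j
      have e2 : j + ((k : ℤ) + 1) = (j + k) + 1 := by ring
      have hk1 := key1 (j + (k : ℤ))
      have hne : a (n - 1) (j + (k : ℤ)) * a n (j + (k : ℤ)) ≠ 0 :=
        ne_of_gt (mul_pos (hbpos _) (hcpos _))
      constructor
      · intro hev
        have hko : Odd k := by simpa [Nat.even_add_one] using hev
        have hIH := (ih j).2 hko
        push_cast
        rw [e2]
        apply mul_left_cancel₀ hne
        linear_combination (a n (j + (k : ℤ)) * a n (j + (k : ℤ) + 1)) * hIH -
          (a n j * a n (j + (k : ℤ))) * hk1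
      · intro hodd
        have hke : Even k := by simpa [Nat.odd_add_one] using hodd
        have hIH := (ih j).1 hke
        push_cast
        rw [e2]
        apply mul_left_cancel₀ hne
        linear_combination (a (n - 1) (j + (k : ℤ)) * a (n - 1) (j + (k : ℤ) + 1)) * hIH +
          (a n j * a (n - 1) (j + (k : ℤ))) * hk1
  -- product of the two bottom rows is n-periodic
  have prodper : ∀ j : ℤ, a (n - 1) (j + n) * a n (j + n) = a (n - 1) j * a n j := by
    intro j
    have h6 := hd (j + n)
    have h6' := hd j
    rw [show j + n + 1 = (j + 1) + n by ring, hper (n - 2) (j + 1) (by omega) (by omega),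
      hper (n - 3) (j + 1) (by omega) (by omega), hper (n - 2) j (by omega) (by omega)] at h6
    have he : (0 : ℤ) < a (n - 3) (j + 1) := hpos _ _ (by omega) (by omega)
    have h7 : a (n - 3) (j + 1) * (a (n - 1) (j + n) * a n (j + n)) =
        a (n - 3) (j + 1) * (a (n - 1) j * a n j) := by
      linear_combination h6' - h6
    exact mul_left_cancel₀ (ne_of_gt he) h7
  have hnt : ((n.toNat : ℤ)) = n := Int.toNat_of_nonneg (by omega)
  -- even case
  have hEv : Even n → ∀ j : ℤ, a (n - 1) (j + n) = a (n - 1) j ∧ a n (j + n) = a n j := by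
    intro hnE j
    have hnat : Even n.toNat := by rwa [← hnt, Int.even_coe_nat] at hnE
    have hE := (alt n.toNat j).1 hnat
    rw [hnt] at hE
    have P := prodper j
    constructor
    · have h1 : a (n - 1) (j + n) * a (n - 1) (j + n) * a n j =
          a (n - 1) j * a (n - 1) j * a n j := by
        linear_combination (-(a (n - 1) (j + n))) * hE + (a (n - 1) j) * P
      exact friezeD_sq_cancel (hbpos _) (hbpos _)
        (mul_right_cancel₀ (ne_of_gt (hcpos j)) h1)
    · have h1 : a n (j + n) * a n (j + n) * a (n - 1) j =
          a n j * a n j * a (n - 1) j := by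
        linear_combination (a n (j + n)) * hE + (a n j) * P
      exact friezeD_sq_cancel (hcpos _) (hcpos _)
        (mul_right_cancel₀ (ne_of_gt (hbpos j)) h1)
  -- odd case
  have hOd : Odd n → ∀ j : ℤ, a (n - 1) (j + n) = a n j ∧ a n (j + n) = a (n - 1) j := by
    intro hnO j
    have hnat : Odd n.toNat := by rwa [← hnt, Int.odd_coe_nat] at hnO
    have hO := (alt n.toNat j).2 hnat
    rw [hnt] at hO
    have P := prodper j
    constructor
    · have h1 : a (n - 1) (j + n) * a (n - 1) (j + n) * a (n - 1) j =
          a n j * a n j * a (n - 1) j := by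
        linear_combination (a (n - 1) (j + n)) * hO + (a n j) * P
      exact friezeD_sq_cancel (hbpos _) (hcpos _)
        (mul_right_cancel₀ (ne_of_gt (hbpos j)) h1)
    · have h1 : a n (j + n) * a n (j + n) * a n j =
          a (n - 1) j * a (n - 1) j * a n j := by
        linear_combination (-(a n (j + n))) * hO + (a (n - 1) j) * P
      exact friezeD_sq_cancel (hcpos _) (hbpos _)
        (mul_right_cancel₀ (ne_of_gt (hcpos j)) h1)
  refine ⟨hEv, hOd, ?_⟩
  intro r j hr1 hrn
  have h2n : j + 2 * n = (j + n) + n := by ring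
  by_cases hmid : r ≤ n - 2
  · rw [h2n, hper r (j + n) hr1 hmid, hper r j hr1 hmid]
  · have hr : r = n - 1 ∨ r = n := by omega
    rcases hr with h | h
    · rcases Int.even_or_odd n with hnE | hnO
      · rw [h, h2n, (hEv hnE (j + n)).1, (hEv hnE j).1]
      · rw [h, h2n, (hOd hnO (j + n)).1, (hOd hnO j).2]
    · rcases Int.even_or_odd n with hnE | hnO
      · rw [h, h2n, (hEv hnE (j + n)).2, (hEv hnE j).2]
      · rw [h, h2n, (hOd hnO (j + n)).2, (hOd hnO j).1]
end

section
/- Let n ≥ 4 and let (a(r,j)) and (a′(r,j)) be friezes of type D_n such that a(1,j) = a′(1,j) for all j ∈ ℤ (equal first nontrivial rows) and such that a(n−1, j₀) = a′(n−1, j₀) for some j₀ ∈ ℤ (one common entry in the (n−1)-st bottom row). Then a(r,j) = a′(r,j) for all 1 ≤ r ≤ n and all j ∈ ℤ. In other words, a frieze of type D_n is uniquely determined by its quiddity row together with the value of a single entry in one of its bottom rows; this is the uniqueness underlying the 'ungluing' procedure of Definition 3.4. -/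
/-- a type `D_n` frieze is determined by its quiddity row together with a
single entry of the `(n−1)`-st bottom row. -/
theorem friezeD_determined_by_quiddity_and_one_entry (n : ℤ) (hn : 4 ≤ n)
    (a a' : ℤ → ℤ → ℤ) (ha : IsFriezeD n a) (ha' : IsFriezeD n a')
    (hq : ∀ j : ℤ, a 1 j = a' 1 j)
    (j₀ : ℤ) (h₀ : a (n - 1) j₀ = a' (n - 1) j₀) :
    ∀ r j : ℤ, 1 ≤ r → r ≤ n → a r j = a' r j := by
  obtain ⟨hp, h0, hd, hb1, hb2, hm⟩ := ha
  obtain ⟨hp', h0', hd', hb1', hb2', hm'⟩ := ha'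
  -- positivity including row 0
  have hpos : ∀ r j : ℤ, 0 ≤ r → r ≤ n → 0 < a r j := by
    intro r j hr hrn
    rcases eq_or_lt_of_le hr with h | h
    · rw [← h, h0]; norm_num
    · exact hp r j h hrn
  have hpos' : ∀ r j : ℤ, 0 ≤ r → r ≤ n → 0 < a' r j := by
    intro r j hr hrn
    rcases eq_or_lt_of_le hr with h | h
    · rw [← h, h0']; norm_num
    · exact hp' r j h hrn
  -- rows 0 .. n-2 agree
  have hrow : ∀ k : ℕ, (k : ℤ) ≤ n - 2 → ∀ j, a (k : ℤ) j = a' (k : ℤ) j := by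
    intro k
    induction k using Nat.strong_induction_on with
    | _ k ih =>
      match k with
      | 0 => intro _ j; rw [Nat.cast_zero, h0, h0']
      | 1 => intro _ j; exact_mod_cast hq j
      | (k + 2) =>
        intro hk j
        have hknn : (0:ℤ) ≤ (k:ℤ) := Int.natCast_nonneg k
        have hk2 : ((k:ℤ)) + 2 ≤ n - 2 := by push_cast at hk; linarith
        have e := hd ((k:ℤ) + 1) j (by linarith) (by linarith)
        have e' := hd' ((k:ℤ) + 1) j (by linarith) (by linarith)
        have ekj1 : a (k:ℤ) (j + 1) = a' (k:ℤ) (j + 1) := by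
          have := ih k (by omega) (by linarith) (j + 1); exact this
        have ek1j : a ((k:ℤ) + 1) j = a' ((k:ℤ) + 1) j := by
          have := ih (k + 1) (by omega) (by push_cast; linarith) j
          push_cast at this; exact this
        have ek1j1 : a ((k:ℤ) + 1) (j + 1) = a' ((k:ℤ) + 1) (j + 1) := by
          have := ih (k + 1) (by omega) (by push_cast; linarith) (j + 1)
          push_cast at this; exact this
        have hsimp : ((k:ℤ) + 1) - 1 = (k:ℤ) := by ring
        rw [hsimp] at e e'
        rw [ek1j, ek1j1, ekj1] at e
        have heq : a' (k:ℤ) (j + 1) * a ((k:ℤ) + 1 + 1) j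
            = a' (k:ℤ) (j + 1) * a' ((k:ℤ) + 1 + 1) j := by linarith [e.symm.trans e']
        have hne : a' (k:ℤ) (j + 1) ≠ 0 :=
          ne_of_gt (hpos' _ _ hknn (by linarith))
        have := mul_left_cancel₀ hne heq
        push_cast
        convert this using 2 <;> ring
  have hrowZ : ∀ r : ℤ, 0 ≤ r → r ≤ n - 2 → ∀ j, a r j = a' r j := by
    intro r hr hrn j
    have ht : ((r.toNat : ℤ)) = r := Int.toNat_of_nonneg hr
    have := hrow r.toNat (by rw [ht]; exact hrn) j
    rwa [ht] at this
  have hn2 : ∀ j, a (n - 2) j = a' (n - 2) j := hrowZ (n - 2) (by linarith) le_rfl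
  have hn3 : ∀ j, a (n - 3) j = a' (n - 3) j := hrowZ (n - 3) (by linarith) (by linarith)
  -- row n-1 forward
  have fwd : ∀ m : ℕ, a (n - 1) (j₀ + m) = a' (n - 1) (j₀ + m) := by
    intro m
    induction m with
    | zero => simpa using h₀
    | succ m ih =>
      have e := hb1 (j₀ + m)
      have e' := hb1' (j₀ + m)
      rw [ih, hn2] at e
      have heq := e.trans e'.symm
      have hne : a' (n - 1) (j₀ + m) ≠ 0 :=
        ne_of_gt (hpos' _ _ (by linarith) (by linarith))
      have := mul_left_cancel₀ hne heq
      push_cast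
      convert this using 2 <;> ring
  -- row n-1 backward
  have bwd : ∀ m : ℕ, a (n - 1) (j₀ - m) = a' (n - 1) (j₀ - m) := by
    intro m
    induction m with
    | zero => simpa using h₀
    | succ m ih =>
      have e := hb1 (j₀ - (m + 1))
      have e' := hb1' (j₀ - (m + 1))
      have hj : j₀ - ((m:ℤ) + 1) + 1 = j₀ - m := by ring
      rw [hj] at e e'
      rw [ih, hn2] at e
      have heq := e.trans e'.symm
      have hne : a' (n - 1) (j₀ - m) ≠ 0 :=
        ne_of_gt (hpos' _ _ (by linarith) (by linarith))
      have := mul_right_cancel₀ hne heq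
      push_cast
      convert this using 2 <;> ring
  have hrn1 : ∀ j, a (n - 1) j = a' (n - 1) j := by
    intro j
    rcases le_or_gt j₀ j with h | h
    · have : j = j₀ + ((j - j₀).toNat : ℤ) := by
        rw [Int.toNat_of_nonneg (by linarith)]; ring
      rw [this]; exact fwd _
    · have : j = j₀ - ((j₀ - j).toNat : ℤ) := by
        rw [Int.toNat_of_nonneg (by linarith)]; ring
      rw [this]; exact bwd _
  -- row n
  have hrn : ∀ j, a n j = a' n j := by
    intro j
    have e := hm j
    have e' := hm' j
    rw [hn2, hn2, hn3, hrn1] at e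
    have heq : a' (n - 3) (j + 1) * a' (n - 1) j * a n j
        = a' (n - 3) (j + 1) * a' (n - 1) j * a' n j := by linarith [e.symm.trans e']
    have hne : a' (n - 3) (j + 1) * a' (n - 1) j ≠ 0 :=
      ne_of_gt (mul_pos (hpos' _ _ (by linarith) (by linarith))
        (hpos' _ _ (by linarith) (by linarith)))
    exact mul_left_cancel₀ hne heq
  intro r j h1 h2
  rcases lt_or_ge r (n - 1) with h | h
  · exact hrowZ r (by linarith) (by omega) j
  · rcases eq_or_lt_of_le h with h' | h'
    · rw [← h']; exact hrn1 j
    · have : r = n := by omega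
      rw [this]; exact hrn j
end

section
/- Let n ≥ 4 and let (a(r,j)) be a frieze of type D_n with glued pattern g, and extend g by the convention g(0,j) = 1 for all j. Then g satisfies the full type-A diamond rule throughout its rows: g(r,j)·g(r,j+1) = 1 + g(r−1,j+1)·g(r+1,j) for all 1 ≤ r ≤ n−2 and all j ∈ ℤ. -/
/-- The glued pattern of a type `D_n` frieze: rows `1,…,n−2` are unchanged and the
two bottom rows are replaced by the single row of products `a (n−1) j * a n j`. -/
def gluedPattern (n : ℤ) (a : ℤ → ℤ → ℤ) (r j : ℤ) : ℤ :=
  if r = n - 1 then a (n - 1) j * a n j else a r j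

/-- the glued pattern of a type `D_n` frieze satisfies the full type `A`
diamond rule (with the convention `g 0 j = 1`, which holds automatically here). -/
theorem gluedPattern_diamond_rule (n : ℤ) (hn : 4 ≤ n) (a : ℤ → ℤ → ℤ)
    (ha : IsFriezeD n a) :
    ∀ r j : ℤ, 1 ≤ r → r ≤ n - 2 →
      gluedPattern n a r j * gluedPattern n a r (j + 1) =
        1 + gluedPattern n a (r - 1) (j + 1) * gluedPattern n a (r + 1) j := by
  obtain ⟨hpos, h0, hdia, hb1, hb2, hmid⟩ := ha
  intro r j hr hrn
  unfold gluedPattern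
  have hr1 : r ≠ n - 1 := by omega
  have hrm1 : r - 1 ≠ n - 1 := by omega
  simp only [if_neg hr1, if_neg hrm1]
  rcases eq_or_lt_of_le hrn with h | h
  · -- r = n - 2
    have hrp : r + 1 = n - 1 := by omega
    rw [if_pos hrp, h]
    have := hmid j
    have h3 : n - 2 - 1 = n - 3 := by omega
    rw [h3]
    linarith [this]
  · -- r ≤ n - 3
    have hrp : r + 1 ≠ n - 1 := by omega
    rw [if_neg hrp]
    exact hdia r j hr (by omega)
end

section
/- (Proposition 3.8, frieze form.) Let n ≥ 4, let (a(r,j)) be a frieze of type D_n whose ordinary rows are n-periodic (a(r,j+n) = a(r,j) for 1 ≤ r ≤ n−2 and all j), with glued pattern g, and let F be a frieze of type A_{2n−1} containing the doubled quiddity row of (a(r,j)) at position p ∈ ℤ. Then the glued pattern g appears as a connected region inside F: for every r with 1 ≤ r ≤ n−1 and every i with p ≤ i ≤ p+2n−1−r, one has F(i, i+r+1) = g(r, i+2−p), where the second index of g is read modulo n with representatives in {1,…,n}. -/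
/-- A frieze of type `A_m`: `F i j` is defined for `i ≤ j ≤ i + m + 3`. -/
def IsFriezeA (m : ℤ) (F : ℤ → ℤ → ℤ) : Prop :=
  (∀ i : ℤ, F i i = 0) ∧
  (∀ i : ℤ, F i (i + 1) = 1) ∧
  (∀ i : ℤ, F i (i + m + 2) = 1) ∧
  (∀ i : ℤ, F i (i + m + 3) = 0) ∧
  (∀ i j : ℤ, i + 2 ≤ j → j ≤ i + m + 1 → 0 < F i j) ∧
  (∀ i j : ℤ, i + 1 ≤ j → j ≤ i + m + 2 →
    F i j * F (i + 1) (j + 1) - F (i + 1) j * F i (j + 1) = 1)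

/-- The representative of `j` modulo `n` lying in `{1, …, n}` (for `n > 0`). -/
def modRep (n j : ℤ) : ℤ := (j - 1) % n + 1

lemma modRep_lb (n j : ℤ) (hn : 0 < n) : 1 ≤ modRep n j := by
  unfold modRep; have := Int.emod_nonneg (j - 1) (ne_of_gt hn); omega

lemma modRep_ub (n j : ℤ) (hn : 0 < n) : modRep n j ≤ n := by
  unfold modRep; have := Int.emod_lt_of_pos (j - 1) hn; omega

lemma modRep_eq_self (n j : ℤ) (h1 : 1 ≤ j) (h2 : j ≤ n) : modRep n j = j := by
  unfold modRep; rw [Int.emod_eq_of_lt (by omega) (by omega)]; ring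

lemma modRep_succ (n j : ℤ) : modRep n (modRep n j + 1) = modRep n (j + 1) := by
  unfold modRep
  have h : (j - 1) % n + 1 + 1 - 1 = (j - 1) % n + 1 := by ring
  rw [h, Int.emod_add_emod]
  norm_num

/-- The row relation for the glued pattern, for all `j` (rows `1 ≤ r ≤ n-2`). -/
lemma glued_rel_raw (n : ℤ) (_hn : 4 ≤ n) (a : ℤ → ℤ → ℤ) (ha : IsFriezeD n a) :
    ∀ r j : ℤ, 1 ≤ r → r ≤ n - 2 →
      gluedPattern n a r j * gluedPattern n a r (j + 1) =
        1 + gluedPattern n a (r - 1) (j + 1) * gluedPattern n a (r + 1) j := by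
  obtain ⟨hpos, h0, hmid, hbot1, hbot2, hglue⟩ := ha
  intro r j hr1 hr2
  unfold gluedPattern
  rcases lt_or_eq_of_le hr2 with h | h
  · -- r ≤ n - 3
    have hr3 : r ≤ n - 3 := by omega
    rw [if_neg (by omega), if_neg (by omega), if_neg (by omega), if_neg (by omega)]
    exact hmid r j hr1 hr3
  · -- r = n - 2
    subst h
    rw [if_neg (by omega), if_neg (by omega), if_neg (by omega), if_pos (by ring)]
    have := hglue j
    rw [show n - 2 - 1 = n - 3 by ring]
    linarith [hglue j]

/-- The row relation for the glued pattern read modulo `n` on `{1,…,n}`. -/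
lemma glued_rel (n : ℤ) (hn : 4 ≤ n) (a : ℤ → ℤ → ℤ) (ha : IsFriezeD n a)
    (hper : ∀ r j : ℤ, 1 ≤ r → r ≤ n - 2 → a r (j + n) = a r j) :
    ∀ r j : ℤ, 1 ≤ r → r ≤ n - 2 → 1 ≤ j → j ≤ n →
      gluedPattern n a r j * gluedPattern n a r (modRep n (j + 1)) =
        1 + gluedPattern n a (r - 1) (modRep n (j + 1)) * gluedPattern n a (r + 1) j := by
  intro r j hr1 hr2 hj1 hj2
  rcases lt_or_eq_of_le hj2 with h | h
  · rw [modRep_eq_self n (j + 1) (by omega) (by omega)]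
    exact glued_rel_raw n hn a ha r j hr1 hr2
  · rw [h]
    have hm : modRep n (n + 1) = 1 := by
      unfold modRep
      rw [show n + 1 - 1 = n by ring, Int.emod_self]
      norm_num
    rw [hm]
    have key := glued_rel_raw n hn a ha r n hr1 hr2
    have e1 : gluedPattern n a r (n + 1) = gluedPattern n a r 1 := by
      unfold gluedPattern
      rw [if_neg (by omega), if_neg (by omega), show n + 1 = 1 + n by ring]
      exact hper r 1 hr1 hr2
    have e2 : gluedPattern n a (r - 1) (n + 1) = gluedPattern n a (r - 1) 1 := by
      rcases eq_or_lt_of_le hr1 with h1 | h1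
      · unfold gluedPattern
        rw [if_neg (by omega), if_neg (by omega), ← h1]
        norm_num [(ha.2.1 (n + 1)), (ha.2.1 1)]
      · unfold gluedPattern
        rw [if_neg (by omega), if_neg (by omega), show n + 1 = 1 + n by ring]
        exact hper (r - 1) 1 (by omega) (by omega)
    rw [e1, e2] at key
    exact key

/-- Positivity of the glued pattern. -/
lemma glued_pos (n : ℤ) (hn : 4 ≤ n) (a : ℤ → ℤ → ℤ) (ha : IsFriezeD n a) :
    ∀ r j : ℤ, 0 ≤ r → r ≤ n - 1 → 0 < gluedPattern n a r j := by
  intro r j hr0 hr1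
  unfold gluedPattern
  rcases eq_or_lt_of_le hr1 with h | h
  · rw [if_pos h]
    exact mul_pos (ha.1 (n - 1) j (by omega) (by omega)) (ha.1 n j (by omega) le_rfl)
  · rw [if_neg (by omega)]
    rcases eq_or_lt_of_le hr0 with h0 | h0
    · rw [← h0, ha.2.1 j]; norm_num
    · exact ha.1 r j (by omega) (by omega)

/-- Proposition 3.8, frieze form: the glued pattern of a type `D_n` frieze
appears as a connected region inside a type `A_{2n−1}` frieze containing the doubled
quiddity row at position `p`. -/
theorem gluedPattern_in_friezeA (n : ℤ) (hn : 4 ≤ n) (a : ℤ → ℤ → ℤ)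
    (ha : IsFriezeD n a)
    (hper : ∀ r j : ℤ, 1 ≤ r → r ≤ n - 2 → a r (j + n) = a r j)
    (F : ℤ → ℤ → ℤ) (hF : IsFriezeA (2 * n - 1) F) (p : ℤ)
    (hq : ∀ k : ℤ, 1 ≤ k → k ≤ 2 * n - 1 →
      F (p + k - 1) (p + k + 1) = a 1 (modRep n (k + 1))) :
    ∀ r i : ℤ, 1 ≤ r → r ≤ n - 1 → p ≤ i → i ≤ p + 2 * n - 1 - r →
      F i (i + r + 1) = gluedPattern n a r (modRep n (i + 2 - p)) := by
  obtain ⟨hF0, hF1, hFm2, hFm3, hFpos, hFd⟩ := hF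
  have hn0 : (0 : ℤ) < n := by omega
  suffices H : ∀ r : ℤ, 1 ≤ r → ∀ s : ℤ, 1 ≤ s → s ≤ r → s ≤ n - 1 →
      ∀ i : ℤ, p ≤ i → i ≤ p + 2 * n - 1 - s →
        F i (i + s + 1) = gluedPattern n a s (modRep n (i + 2 - p)) by
    intro r i hr1 hr2 hi1 hi2
    exact H r hr1 r hr1 le_rfl hr2 i hi1 hi2
  intro r hr
  refine Int.le_induction (motive := fun r _ => ∀ s : ℤ, 1 ≤ s → s ≤ r → s ≤ n - 1 →
      ∀ i : ℤ, p ≤ i → i ≤ p + 2 * n - 1 - s →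
        F i (i + s + 1) = gluedPattern n a s (modRep n (i + 2 - p))) ?_ ?_ r hr
  · intro s hs1 hs2 hs3 i hi1 hi2
    have hs : s = 1 := le_antisymm hs2 hs1
    subst hs
    have hk := hq (i + 1 - p) (by omega) (by omega)
    rw [show p + (i + 1 - p) - 1 = i by ring, show p + (i + 1 - p) + 1 = i + 1 + 1 by ring,
      show i + 1 - p + 1 = i + 2 - p by ring] at hk
    rw [hk]
    unfold gluedPattern
    rw [if_neg (by omega)]
  · intro r hr1 IH s hs1 hs2 hs3 i hi1 hi2
    rcases lt_or_eq_of_le hs2 with h | h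
    · exact IH s hs1 (by omega) hs3 i hi1 hi2
    · subst h
      -- s = r + 1, 1 ≤ r ≤ n - 2
      have hrn : r ≤ n - 2 := by omega
      set j := modRep n (i + 2 - p) with hj
      have hj1 : 1 ≤ j := modRep_lb n _ hn0
      have hj2 : j ≤ n := modRep_ub n _ hn0
      have hjs : modRep n (j + 1) = modRep n (i + 3 - p) := by
        rw [hj, modRep_succ, show i + 2 - p + 1 = i + 3 - p by ring]
      -- diamond rule at (i, i + r + 1)
      have hd := hFd i (i + r + 1) (by omega) (by omega)
      -- identify three of the four entries
      have h1 : F i (i + r + 1) = gluedPattern n a r j :=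
        IH r hr1 le_rfl (by omega) i hi1 (by omega)
      have h2 : F (i + 1) (i + r + 1 + 1) = gluedPattern n a r (modRep n (j + 1)) := by
        rw [hjs, show i + r + 1 + 1 = (i + 1) + r + 1 by ring,
          show i + 3 - p = (i + 1) + 2 - p by ring]
        exact IH r hr1 le_rfl (by omega) (i + 1) (by omega) (by omega)
      have h3 : F (i + 1) (i + r + 1) = gluedPattern n a (r - 1) (modRep n (j + 1)) := by
        rcases eq_or_lt_of_le hr1 with hre | hre
        · rw [← hre]
          rw [show i + 1 + 1 = (i + 1) + 1 by ring]
          rw [hF1 (i + 1)]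
          unfold gluedPattern
          rw [if_neg (by omega)]
          norm_num
          exact (ha.2.1 _).symm
        · rw [hjs, show i + r + 1 = (i + 1) + (r - 1) + 1 by ring,
            show i + 3 - p = (i + 1) + 2 - p by ring]
          exact IH (r - 1) (by omega) (by omega) (by omega) (i + 1) (by omega) (by omega)
      rw [h1, h2, h3] at hd
      have hrel := glued_rel n hn a ha hper r j hr1 hrn hj1 hj2
      have hposm : 0 < gluedPattern n a (r - 1) (modRep n (j + 1)) :=
        glued_pos n hn a ha (r - 1) _ (by omega) (by omega)
      have hcan : gluedPattern n a (r - 1) (modRep n (j + 1)) * F i (i + r + 1 + 1) =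
          gluedPattern n a (r - 1) (modRep n (j + 1)) * gluedPattern n a (r + 1) j := by
        nlinarith [hd, hrel]
      have := mul_left_cancel₀ (ne_of_gt hposm) hcan
      rw [show i + (r + 1) + 1 = i + r + 1 + 1 by ring, this]
end

section
/- (Lemma 4.2, symmetry part, frieze form.) Let n ≥ 2 and let F be a frieze of type A_{2n−1}. Let p ∈ ℤ and suppose that the quiddity row of F repeats with shift n along a stretch of length n−1, i.e. F(p+k−1, p+k+1) = F(p+n+k−1, p+n+k+1) for all k = 1,…,n−1, and suppose that F(p−1, p+n) = 1. Then the maximal sectional path of F through the vertex p−1 is palindromic about this entry 1: F(p−1, p+j) = F(p−1, p+n+j) for all j = 1,…,n−1. -/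
/-- Rows of a frieze satisfy the quiddity linear recurrence (ℕ-indexed form). -/
theorem frieze_rec (m : ℤ) (F : ℤ → ℤ → ℤ) (hF : IsFriezeA m F) :
    ∀ t : ℕ, ∀ i : ℤ, (t : ℤ) ≤ m + 1 →
      F i (i + t) + F i (i + t + 2) = F (i + t) (i + t + 2) * F i (i + t + 1) := by
  obtain ⟨hb0, hb1, hb2, hb3, hpos, hdia⟩ := hF
  intro t
  induction t with
  | zero =>
    intro i _
    have e0 : F i (i + ((0:ℕ):ℤ)) = 0 := by rw [show i + ((0:ℕ):ℤ) = i by push_cast; ring]; exact hb0 i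
    have e1 : F i (i + ((0:ℕ):ℤ) + 1) = 1 := by
      rw [show i + ((0:ℕ):ℤ) + 1 = i + 1 by push_cast; ring]; exact hb1 i
    rw [e0, e1]; ring
  | succ t ih =>
    intro i ht
    push_cast at ht ⊢
    have ih' := ih (i + 1) (by linarith)
    have d1 := hdia i (i + (t:ℤ) + 2) (by linarith) (by linarith)
    have d2 := hdia i (i + (t:ℤ) + 1) (by linarith) (by linarith)
    have hCpos : 0 < F (i + 1) (i + (t:ℤ) + 2) := by
      rcases Nat.eq_zero_or_pos t with h | h
      · subst h
        have := hb1 (i + 1)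
        rw [show i + ((0:ℕ):ℤ) + 2 = (i + 1) + 1 by push_cast; ring]
        rw [this]; norm_num
      · exact hpos (i + 1) (i + (t:ℤ) + 2) (by omega) (by omega)
    have hC : F (i + 1) (i + (t:ℤ) + 2) ≠ 0 := ne_of_gt hCpos
    apply mul_left_cancel₀ hC
    ring_nf at d1 d2 ih' ⊢
    linear_combination (norm := ring_nf) d2 - d1 + F i (i + (t:ℤ) + 2) * ih'

/-- Rows of a frieze satisfy the quiddity linear recurrence (ℤ form). -/
theorem frieze_rec' (m : ℤ) (F : ℤ → ℤ → ℤ) (hF : IsFriezeA m F)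
    (i J : ℤ) (hJ1 : i + 1 ≤ J) (hJ2 : J ≤ i + m + 2) :
    F i (J - 1) + F i (J + 1) = F (J - 1) (J + 1) * F i J := by
  have ht : (((J - i - 1).toNat : ℤ)) = J - i - 1 := Int.toNat_of_nonneg (by omega)
  have h := frieze_rec m F hF (J - i - 1).toNat i (by omega)
  rw [ht] at h
  rw [show i + (J - i - 1) = J - 1 by ring] at h
  rw [show J - 1 + 2 = J + 1 by ring, show J - 1 + 1 = J by ring] at h
  exact h

/-- Lemma 4.2, symmetry part: a sectional path through an entry `1` in a
type `A_{2n−1}` frieze whose quiddity row repeats with shift `n` is palindromic about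
that entry. -/
theorem sectional_path_palindromic (n : ℤ) (hn : 2 ≤ n)
    (F : ℤ → ℤ → ℤ) (hF : IsFriezeA (2 * n - 1) F) (p : ℤ)
    (hq : ∀ k : ℤ, 1 ≤ k → k ≤ n - 1 →
      F (p + k - 1) (p + k + 1) = F (p + n + k - 1) (p + n + k + 1))
    (h1 : F (p - 1) (p + n) = 1) :
    ∀ j : ℤ, 1 ≤ j → j ≤ n - 1 → F (p - 1) (p + j) = F (p - 1) (p + n + j) := by
  obtain ⟨hb0, hb1, hb2, hb3, hpos, hdia⟩ := id hF
  set E : ℤ → ℤ := fun j => F (p - 1) (p + j) - F (p - 1) (p + n + j) with hE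
  set U : ℤ → ℤ := fun j => F p (p + j) with hU
  have hE0 : E 0 = 0 := by
    simp only [hE]
    have a : F (p - 1) (p + 0) = 1 := by rw [show p + (0:ℤ) = (p - 1) + 1 by ring]; exact hb1 (p - 1)
    have b : F (p - 1) (p + n + 0) = 1 := by rw [show p + n + (0:ℤ) = p + n by ring]; exact h1
    rw [a, b]; ring
  have hU0 : U 0 = 0 := by
    simp only [hU]; rw [show p + (0:ℤ) = p by ring]; exact hb0 p
  have hU1 : U 1 = 1 := hb1 p
  have hErec : ∀ j : ℤ, 1 ≤ j → j ≤ n - 1 →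
      E (j + 1) = F (p + j - 1) (p + j + 1) * E j - E (j - 1) := by
    intro j hj1 hj2
    have rA := frieze_rec' (2 * n - 1) F hF (p - 1) (p + j) (by omega) (by omega)
    have rB := frieze_rec' (2 * n - 1) F hF (p - 1) (p + n + j) (by omega) (by omega)
    have hq' := hq j hj1 hj2
    rw [← hq'] at rB
    simp only [hE]
    ring_nf at rA rB ⊢
    linear_combination (norm := ring_nf) rA - rB
  have hUrec : ∀ j : ℤ, 1 ≤ j → j ≤ n - 1 →
      U (j + 1) = F (p + j - 1) (p + j + 1) * U j - U (j - 1) := by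
    intro j hj1 hj2
    rcases eq_or_lt_of_le hj1 with h | h
    · subst h
      simp only [hU]
      have b : F p (p + (1 - 1 : ℤ)) = 0 := by rw [show p + ((1:ℤ) - 1) = p by ring]; exact hb0 p
      have a : F p (p + 1) = 1 := hb1 p
      rw [b, a]
      rw [show p + ((1:ℤ) + 1) = p + 1 + 1 by ring, show p + (1:ℤ) - 1 = p by ring]
      ring
    · have rB := frieze_rec' (2 * n - 1) F hF p (p + j) (by omega) (by omega)
      simp only [hU]
      ring_nf at rB ⊢
      linear_combination (norm := ring_nf) rB
  have key : ∀ t : ℕ, (t : ℤ) + 1 ≤ n → E t = E 1 * U t ∧ E (t + 1) = E 1 * U (t + 1) := by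
    intro t
    induction t with
    | zero =>
      intro _
      constructor
      · rw [show (((0:ℕ):ℤ)) = (0:ℤ) by norm_num, hE0, hU0]; ring
      · rw [show (((0:ℕ):ℤ)) + 1 = (1:ℤ) by norm_num, hU1]; ring
    | succ t ih =>
      intro ht
      push_cast at ht
      have ih' := ih (by omega)
      have h1' : (1:ℤ) ≤ (t:ℤ) + 1 := by omega
      have h2' : (t:ℤ) + 1 ≤ n - 1 := by omega
      have e := hErec ((t:ℤ) + 1) h1' h2'
      have u := hUrec ((t:ℤ) + 1) h1' h2'
      rw [show ((t:ℤ) + 1) + 1 = (t:ℤ) + 1 + 1 by ring, show ((t:ℤ) + 1) - 1 = (t:ℤ) by ring] at e u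
      constructor
      · push_cast
        exact ih'.2
      · push_cast
        rw [e, u, ih'.1, ih'.2]; ring
  have hEn : E n = 0 := by
    simp only [hE]
    have b : F (p - 1) (p + n + n) = 1 := by
      have := hb2 (p - 1)
      rw [show (p - 1) + (2 * n - 1) + 2 = p + n + n by ring] at this
      exact this
    rw [h1, b]; ring
  have hUn : 0 < U n := hpos p (p + n) (by omega) (by omega)
  have hcast : (((n - 1).toNat : ℤ)) = n - 1 := Int.toNat_of_nonneg (by omega)
  have hEn' : E n = E 1 * U n := by
    have h := (key (n - 1).toNat (by omega)).2
    rw [hcast, show n - 1 + 1 = n by ring] at h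
    exact h
  have hE1 : E 1 = 0 := by
    have hz : E 1 * U n = 0 := by rw [← hEn', hEn]
    exact (mul_eq_zero.mp hz).resolve_right (ne_of_gt hUn)
  intro j hj1 hj2
  have hcj : ((j.toNat : ℤ)) = j := Int.toNat_of_nonneg (by omega)
  have h := (key j.toNat (by omega)).1
  rw [hcj, hE1] at h
  simp only [hE, zero_mul] at h
  linarith
end

section
/- (Lemma 4.21, frieze form: Ptolemy relation through an entry 1.) Let n ≥ 2, let F be a frieze of type A_{2n−1}, and let p ∈ ℤ be such that F(p−1, p+n) = 1. Then for all integers u, v with p−1 < u < p+n < v < p+2n+1, one has F(u,v) = F(p−1, u)·F(p+n, v) + F(u, p+n)·F(p−1, v). (In the paper's notation this is the identity m = ρ_R⁺(m)·ρ_A⁺(m) + ρ_R⁻(m)·ρ_A⁻(m) for every entry m of the region B, expressing each such entry in terms of its four projections onto the paths R, R̂ and the regions A, Â.) -/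
namespace FriezeAux

variable {m : ℤ} {F : ℤ → ℤ → ℤ}

lemma Fpos (hF : IsFriezeA m F) {i j : ℤ} (h1 : i + 1 ≤ j) (h2 : j ≤ i + m + 2) :
    0 < F i j := by
  obtain ⟨h0, ho, hm2, hm3, hpos, hd⟩ := hF
  rcases eq_or_lt_of_le h1 with h | h
  · rw [← h, ho]; norm_num
  · rcases eq_or_lt_of_le h2 with h' | h'
    · rw [h']
      have := hm2 i
      rw [this]; norm_num
    · exact hpos i j (by omega) (by omega)

lemma recurAux (hF : IsFriezeA m F) : ∀ k : ℕ, ∀ i j : ℤ, j = i + 1 + k → j ≤ i + m + 2 →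
    F i (j + 1) + F i (j - 1) = F (j - 1) (j + 1) * F i j := by
  intro k
  induction k with
  | zero =>
    intro i j hj hj2
    have h : j = i + 1 := by omega
    subst h
    obtain ⟨h0, ho, hm2, hm3, hpos, hd⟩ := hF
    have e0 : i + 1 - 1 = i := by ring
    rw [e0, h0 i, ho i, mul_one, add_zero]
  | succ k ih =>
    intro i j hj hj2
    have IH := ih (i + 1) j (by omega) (by omega)
    obtain ⟨h0, ho, hm2, hm3, hpos, hd⟩ := hF
    have d1 := hd i j (by omega) (by omega)
    have d2 := hd i (j - 1) (by omega) (by omega)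
    have hjj : j - 1 + 1 = j := by ring
    rw [hjj] at d2
    have hpos' : 0 < F (i + 1) j :=
      Fpos ⟨h0, ho, hm2, hm3, hpos, hd⟩ (by omega) (by omega)
    have key : F (i + 1) j * (F i (j + 1) + F i (j - 1)) =
        F (i + 1) j * (F (j - 1) (j + 1) * F i j) := by
      linear_combination -d1 + d2 + F i j * IH
    exact mul_left_cancel₀ hpos'.ne' key

lemma recur (hF : IsFriezeA m F) {i j : ℤ} (h1 : i + 1 ≤ j) (h2 : j ≤ i + m + 2) :
    F i (j + 1) + F i (j - 1) = F (j - 1) (j + 1) * F i j :=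
  recurAux hF (j - i - 1).toNat i j (by omega) h2

lemma wrons (hF : IsFriezeA m F) : ∀ k : ℕ, ∀ a b j : ℤ, a ≤ b → j = b + k → j ≤ a + m + 2 →
    F a j * F b (j + 1) - F a (j + 1) * F b j = F a b := by
  intro k
  induction k with
  | zero =>
    intro a b j hab hj hj2
    have h : j = b := by omega
    subst h
    obtain ⟨h0, ho, hm2, hm3, hpos, hd⟩ := hF
    rw [ho, h0, mul_one, mul_zero, sub_zero]
  | succ k ih =>
    intro a b j hab hj hj2
    have IH := ih a b (j - 1) hab (by omega) (by omega)
    have e : j - 1 + 1 = j := by ring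
    rw [e] at IH
    have ra := recur hF (show a + 1 ≤ j by omega) (show j ≤ a + m + 2 from hj2)
    have rb := recur hF (show b + 1 ≤ j by omega) (show j ≤ b + m + 2 by omega)
    linear_combination IH + F a j * rb - F b j * ra

lemma ptolemy (hF : IsFriezeA m F) : ∀ k : ℕ, ∀ a b c d : ℤ, a ≤ b → b ≤ c →
    c ≤ a + m + 2 → d = c + k → d ≤ a + m + 3 →
    F a c * F b d = F a b * F c d + F a d * F b c := by
  intro k
  induction k using Nat.strong_induction_on with
  | _ k ih =>
    intro a b c d hab hbc hc hd hd2
    match k, ih with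
    | 0, ih =>
      have h : d = c := by omega
      subst h
      obtain ⟨h0, ho, hm2, hm3, hpos, hdd⟩ := hF
      rw [h0 d, mul_zero, zero_add]
    | 1, ih =>
      have h : d = c + 1 := by omega
      subst h
      have hw := wrons hF (c - b).toNat a b c hab (by omega) (by omega)
      obtain ⟨h0, ho, hm2, hm3, hpos, hdd⟩ := hF
      rw [ho c]
      linear_combination hw
    | (k + 2), ih =>
      have IH1 := ih (k + 1) (by omega) a b c (d - 1) hab hbc hc (by omega) (by omega)
      have IH2 := ih k (by omega) a b c (d - 2) hab hbc hc (by omega) (by omega)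
      have ra := recur hF (show a + 1 ≤ d - 1 by omega) (show d - 1 ≤ a + m + 2 by omega)
      have rb := recur hF (show b + 1 ≤ d - 1 by omega) (show d - 1 ≤ b + m + 2 by omega)
      have rc := recur hF (show c + 1 ≤ d - 1 by omega) (show d - 1 ≤ c + m + 2 by omega)
      have e1 : d - 1 + 1 = d := by ring
      have e2 : d - 1 - 1 = d - 2 := by ring
      rw [e1, e2] at ra rb rc
      linear_combination F (d - 2) d * IH1 - IH2 + F a c * rb - F a b * rc - F b c * ra

end FriezeAux

/-- Lemma 4.21, frieze form: Ptolemy relation through an entry `1` in a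
type `A_{2n−1}` frieze. -/
theorem ptolemy_through_one (n : ℤ) (hn : 2 ≤ n)
    (F : ℤ → ℤ → ℤ) (hF : IsFriezeA (2 * n - 1) F) (p : ℤ)
    (h1 : F (p - 1) (p + n) = 1) :
    ∀ u v : ℤ, p - 1 < u → u < p + n → p + n < v → v < p + 2 * n + 1 →
      F u v = F (p - 1) u * F (p + n) v + F u (p + n) * F (p - 1) v := by
  intro u v hu1 hu2 hv1 hv2
  have h := FriezeAux.ptolemy hF (v - (p + n)).toNat (p - 1) u (p + n) v
    (by omega) (by omega) (by omega) (by omega) (by omega)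
  rw [h1, one_mul] at h
  linear_combination h
end

section
/- Let n ≥ 4 and let (a(r,j)) be a frieze of type D_n whose ordinary rows are n-periodic, i.e. a(r, j+n) = a(r,j) for all 1 ≤ r ≤ n−2 and all j ∈ ℤ. Then the glued row is n-periodic: a(n−1, j+n)·a(n, j+n) = a(n−1, j)·a(n, j) for all j ∈ ℤ; consequently the glued pattern g of the frieze satisfies g(r, j+n) = g(r, j) for all 1 ≤ r ≤ n−1 and all j ∈ ℤ. -/
/-- if the ordinary rows of a type `D_n` frieze are `n`-periodic, then so
is the glued row, hence the whole glued pattern is `n`-periodic. -/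
theorem gluedPattern_periodic (n : ℤ) (hn : 4 ≤ n) (a : ℤ → ℤ → ℤ)
    (ha : IsFriezeD n a)
    (hper : ∀ r j : ℤ, 1 ≤ r → r ≤ n - 2 → a r (j + n) = a r j) :
    (∀ j : ℤ, a (n - 1) (j + n) * a n (j + n) = a (n - 1) j * a n j) ∧
    (∀ r j : ℤ, 1 ≤ r → r ≤ n - 1 →
      gluedPattern n a r (j + n) = gluedPattern n a r j) := by

  obtain ⟨hpos, h0, hdia, hb1, hb2, hrel⟩ := ha
  have key : ∀ j : ℤ, a (n - 1) (j + n) * a n (j + n) = a (n - 1) j * a n j := by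
    intro j
    have h1 := hrel j
    have h2 := hrel (j + n)
    have p2 : a (n - 2) (j + n) = a (n - 2) j :=
      hper (n - 2) j (by omega) (by omega)
    have p2' : a (n - 2) (j + n + 1) = a (n - 2) (j + 1) := by
      have := hper (n - 2) (j + 1) (by omega) (by omega)
      simpa [add_right_comm] using this
    have p3' : a (n - 3) (j + n + 1) = a (n - 3) (j + 1) := by
      have := hper (n - 3) (j + 1) (by omega) (by omega)
      simpa [add_right_comm] using this
    rw [p2, p2', p3'] at h2
    rw [h1] at h2
    have hpos3 : 0 < a (n - 3) (j + 1) := hpos (n - 3) (j + 1) (by omega) (by omega)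
    have : a (n - 3) (j + 1) * (a (n - 1) j * a n j) =
        a (n - 3) (j + 1) * (a (n - 1) (j + n) * a n (j + n)) := by ring_nf; ring_nf at h2; omega
    exact (mul_left_cancel₀ (ne_of_gt hpos3) this).symm
  refine ⟨key, ?_⟩
  intro r j hr1 hr2
  unfold gluedPattern
  by_cases hrn : r = n - 1
  · simp [hrn, key j]
  · simp only [hrn, if_false]
    exact hper r j hr1 (by omega)
end
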